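/- arXiv:2210.04488 — 2 statements merged into one kernel-verified Lean document; each statement's English description precedes it below -/
import Mathlib

section
/- For every ℓ̄ > 0, the minimum over ϑ ∈ ℝ of L̄_N(ℓ̄, ϑ) is attained at ϑ* = ℓ̄(ℓ̄ − 1)/(ℓ̄ + 1) if ℓ̄ > 1 and at ϑ* = 0 if 0 < ℓ̄ ≤ 1, and the minimal value is 2ℓ̄√ℓ̄/(ℓ̄ + 1) if ℓ̄ > 1 and ℓ̄ if 0 < ℓ̄ ≤ 1. -/
open Matrix

/-- The 2×2 pivot matrix M(ℓ,ϑ,c,s) = A − B with A = diag(ℓ,0), B = ϑ·[[c²,cs],[cs,s²]]. -/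
noncomputable def pivotM (l θ c s : ℝ) : Matrix (Fin 2) (Fin 2) ℝ :=
  !![l - θ * c ^ 2, -(θ * c * s); -(θ * c * s), -(θ * s ^ 2)]

/-- Frobenius norm: square root of the sum of squares of the entries. -/
noncomputable def frobNorm (A : Matrix (Fin 2) (Fin 2) ℝ) : ℝ :=
  Real.sqrt (∑ i, ∑ j, (A i j) ^ 2)

/-- Operator norm: the ℓ²→ℓ² operator norm, i.e. the largest singular value. -/
noncomputable def opNorm (A : Matrix (Fin 2) (Fin 2) ℝ) : ℝ :=
  ‖LinearMap.toContinuousLinearMap (Matrix.toEuclideanLin A)‖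

/-- Nuclear norm: the trace of √(AᴴA), i.e. the sum of the singular values. -/
noncomputable def nucNorm (A : Matrix (Fin 2) (Fin 2) ℝ) : ℝ :=
  ((Matrix.posSemidef_conjTranspose_mul_self A).1.eigenvectorUnitary.1 *
    Matrix.diagonal ((RCLike.ofReal : ℝ → ℝ) ∘ Real.sqrt ∘
      (Matrix.posSemidef_conjTranspose_mul_self A).1.eigenvalues) *
    (star (Matrix.posSemidef_conjTranspose_mul_self A).1.eigenvectorUnitary :
      Matrix (Fin 2) (Fin 2) ℝ)).trace

/-- Limiting cosine c̄(ℓ̄) in the γ → ∞ disproportional framework. -/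
noncomputable def cBar (l : ℝ) : ℝ := Real.sqrt (l / (1 + l))

/-- Limiting sine s̄(ℓ̄) = √(1/(1+ℓ̄)). -/
noncomputable def sBar (l : ℝ) : ℝ := Real.sqrt (1 / (1 + l))

/-- Asymptotic Frobenius loss L̄_F(ℓ̄, ϑ). -/
noncomputable def lossBarF (l θ : ℝ) : ℝ := frobNorm (pivotM l θ (cBar l) (sBar l))

/-- Asymptotic operator-norm loss L̄_O(ℓ̄, ϑ). -/
noncomputable def lossBarO (l θ : ℝ) : ℝ := opNorm (pivotM l θ (cBar l) (sBar l))

/-- Asymptotic nuclear-norm loss L̄_N(ℓ̄, ϑ). -/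
noncomputable def lossBarN (l θ : ℝ) : ℝ := nucNorm (pivotM l θ (cBar l) (sBar l))

lemma psd_smul' {n : Type*} [Fintype n] {A : Matrix n n ℝ} (hA : A.PosSemidef) {c : ℝ}
    (hc : 0 ≤ c) : (c • A).PosSemidef := by
  constructor
  · unfold Matrix.IsHermitian
    rw [conjTranspose_smul, hA.1.eq, star_trivial]
  · intro x
    exact (hA.smul hc).2 x

lemma ch_fin_two (A : Matrix (Fin 2) (Fin 2) ℝ) :
    A * A = A.trace • A - A.det • (1 : Matrix (Fin 2) (Fin 2) ℝ) := by
  ext i j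
  fin_cases i <;> fin_cases j <;>
    simp [Matrix.mul_apply, Fin.sum_univ_two, Matrix.det_fin_two,
      Matrix.trace_fin_two, Matrix.one_apply, Matrix.sub_apply] <;> ring

lemma sqrt_add_sqrt_aux (a b : ℝ) (ha : 0 ≤ a) (hb : 0 ≤ b) :
    Real.sqrt a + Real.sqrt b = Real.sqrt (a + b + 2 * Real.sqrt (a * b)) := by
  rw [Real.sqrt_mul ha,
    show a + b + 2 * (Real.sqrt a * Real.sqrt b) = (Real.sqrt a + Real.sqrt b) ^ 2 by
      nlinarith [Real.sq_sqrt ha, Real.sq_sqrt hb],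
    Real.sqrt_sq (by positivity)]

lemma trace_sqrt_fin_two {P : Matrix (Fin 2) (Fin 2) ℝ} (hP : P.PosSemidef)
    (hpos : 0 < P.trace + 2 * Real.sqrt P.det) :
    (hP.1.eigenvectorUnitary.1 *
      Matrix.diagonal ((RCLike.ofReal : ℝ → ℝ) ∘ Real.sqrt ∘ hP.1.eigenvalues) *
      (star hP.1.eigenvectorUnitary : Matrix (Fin 2) (Fin 2) ℝ)).trace
      = Real.sqrt (P.trace + 2 * Real.sqrt P.det) := by
  rw [trace_mul_cycle, Unitary.coe_star_mul_self, Matrix.one_mul,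
    trace_diagonal, Fin.sum_univ_two, hP.1.trace_eq_sum_eigenvalues,
    hP.1.det_eq_prod_eigenvalues, Fin.sum_univ_two, Fin.prod_univ_two]
  simp only [Function.comp_apply, RCLike.ofReal_real_eq_id, id]
  exact sqrt_add_sqrt_aux _ _ (hP.eigenvalues_nonneg 0) (hP.eigenvalues_nonneg 1)

lemma nucNorm_symm (a b e : ℝ) (h : 0 < a ^ 2 + 2 * b ^ 2 + e ^ 2) :
    nucNorm !![a, b; b, e]
      = Real.sqrt (a ^ 2 + 2 * b ^ 2 + e ^ 2 + 2 * |a * e - b * b|) := by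
  set A : Matrix (Fin 2) (Fin 2) ℝ := !![a, b; b, e] with hA
  have hAH : Aᴴ = A := by
    ext i j
    fin_cases i <;> fin_cases j <;> simp [hA]
  have htr : (Aᴴ * A).trace = a ^ 2 + 2 * b ^ 2 + e ^ 2 := by
    rw [hAH, hA, Matrix.trace_fin_two]
    simp [Matrix.mul_apply, Fin.sum_univ_two]
    ring
  have hdet : Real.sqrt (Aᴴ * A).det = |a * e - b * b| := by
    rw [det_mul, hAH, hA, Matrix.det_fin_two_of]
    rw [← pow_two, Real.sqrt_sq_eq_abs]
  rw [nucNorm, trace_sqrt_fin_two (Matrix.posSemidef_conjTranspose_mul_self A) (by rw [htr, hdet]; positivity), htr, hdet]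

lemma lossBarN_eq (l : ℝ) (hl : 0 < l) (θ : ℝ) :
    lossBarN l θ = Real.sqrt
      ((l ^ 2 * (1 + l - θ) ^ 2 + (2 * l + 1) * θ ^ 2 + 2 * l * (1 + l) * |θ|)
        / (1 + l) ^ 2) := by
  have h1l : (0:ℝ) < 1 + l := by linarith
  have hc2 : (cBar l) ^ 2 = l / (1 + l) := Real.sq_sqrt (by positivity)
  have hs2 : (sBar l) ^ 2 = 1 / (1 + l) := Real.sq_sqrt (by positivity)
  have hl2 : Real.sqrt l ^ 2 = l := Real.sq_sqrt hl.le
  have hcs : cBar l * sBar l = Real.sqrt l / (1 + l) := by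
    rw [cBar, sBar, ← Real.sqrt_mul (by positivity),
      show l / (1 + l) * (1 / (1 + l)) = (Real.sqrt l / (1 + l)) ^ 2 by
        have h1l' : (1:ℝ) + l ≠ 0 := h1l.ne'
        field_simp
        rw [hl2],
      Real.sqrt_sq (by positivity)]
  have hb : -(θ * cBar l * sBar l) = -(θ * (Real.sqrt l / (1 + l))) := by
    rw [mul_assoc, hcs]
  have hθ2 : (0:ℝ) < θ ^ 2 ∨ θ = 0 := by
    rcases eq_or_ne θ 0 with h | h
    · right; exact h
    · left; positivity
  have hpos : 0 < (l - θ * (cBar l) ^ 2) ^ 2 + 2 * (-(θ * cBar l * sBar l)) ^ 2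
      + (-(θ * (sBar l) ^ 2)) ^ 2 := by
    rw [hc2, hs2]
    rcases hθ2 with h | h
    · have : 0 < (-(θ * (1 / (1 + l)))) ^ 2 := by
        rw [neg_sq, mul_pow]
        positivity
      nlinarith [sq_nonneg (l - θ * (l / (1 + l))), sq_nonneg (-(θ * cBar l * sBar l))]
    · subst h
      simp
      positivity
  rw [lossBarN, pivotM, nucNorm_symm _ _ _ hpos]
  congr 1
  rw [hb, hc2, hs2]
  have habs : |(l - θ * (l / (1 + l))) * (-(θ * (1 / (1 + l))))
      - (-(θ * (Real.sqrt l / (1 + l)))) * (-(θ * (Real.sqrt l / (1 + l))))|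
      = l * |θ| / (1 + l) := by
    have harg : (l - θ * (l / (1 + l))) * (-(θ * (1 / (1 + l))))
        - (-(θ * (Real.sqrt l / (1 + l)))) * (-(θ * (Real.sqrt l / (1 + l))))
        = -(l * θ / (1 + l)) := by
      rw [neg_mul_neg,
        show θ * (Real.sqrt l / (1 + l)) * (θ * (Real.sqrt l / (1 + l)))
          = θ ^ 2 * (Real.sqrt l ^ 2) * (1 / (1 + l)) ^ 2 by ring, hl2]
      field_simp
      ring
    rw [harg, abs_neg, abs_div, abs_mul, abs_of_pos hl, abs_of_pos h1l]
  rw [habs]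
  rw [neg_sq, neg_sq, mul_pow, mul_pow, div_pow, div_pow, hl2]
  field_simp
  ring

theorem optimal_nuclear_shrinker_bar (l : ℝ) (hl : 0 < l) :
    (∀ θ : ℝ, lossBarN l (if 1 < l then l * (l - 1) / (l + 1) else 0) ≤ lossBarN l θ) ∧
    lossBarN l (if 1 < l then l * (l - 1) / (l + 1) else 0)
      = (if 1 < l then 2 * l * Real.sqrt l / (l + 1) else l) := by
  have h1l : (0:ℝ) < 1 + l := by linarith
  have hl2 : Real.sqrt l ^ 2 = l := Real.sq_sqrt hl.le
  by_cases hl1 : 1 < l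
  · simp only [if_pos hl1]
    have hts : 0 ≤ l * (l - 1) / (l + 1) := by
      apply div_nonneg (by nlinarith) (by linarith)
    constructor
    · intro θ
      rw [lossBarN_eq l hl, lossBarN_eq l hl]
      apply Real.sqrt_le_sqrt
      refine div_le_div_of_nonneg_right ?_ (by positivity)
      rw [abs_of_nonneg hts]
      have hNstar : l ^ 2 * (1 + l - l * (l - 1) / (l + 1)) ^ 2
          + (2 * l + 1) * (l * (l - 1) / (l + 1)) ^ 2
          + 2 * l * (1 + l) * (l * (l - 1) / (l + 1)) = 4 * l ^ 3 := by
        field_simp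
        ring
      rw [hNstar]
      rcases abs_cases θ with ⟨h1, h2⟩ | ⟨h1, h2⟩ <;> rw [h1]
      · nlinarith [sq_nonneg ((l + 1) * θ - l * (l - 1))]
      · nlinarith [sq_nonneg ((l + 1) * θ - l * (l - 1)),
          mul_nonneg (mul_nonneg hl.le h1l.le) (by linarith : (0:ℝ) ≤ -θ)]
    · rw [lossBarN_eq l hl, abs_of_nonneg hts]
      have hr : (2 * l * Real.sqrt l / (l + 1)) ^ 2 = 4 * l ^ 3 / (l + 1) ^ 2 := by
        rw [div_pow, mul_pow, hl2, mul_pow]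
        ring
      rw [show (l ^ 2 * (1 + l - l * (l - 1) / (l + 1)) ^ 2
          + (2 * l + 1) * (l * (l - 1) / (l + 1)) ^ 2
          + 2 * l * (1 + l) * (l * (l - 1) / (l + 1))) / (1 + l) ^ 2
          = 4 * l ^ 3 / (l + 1) ^ 2 by
        field_simp
        ring, ← hr]
      exact Real.sqrt_sq (by positivity)
  · simp only [if_neg hl1]
    push_neg at hl1
    constructor
    · intro θ
      rw [lossBarN_eq l hl, lossBarN_eq l hl]
      apply Real.sqrt_le_sqrt
      refine div_le_div_of_nonneg_right ?_ (by positivity)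
      simp only [abs_zero]
      rcases abs_cases θ with ⟨h1, h2⟩ | ⟨h1, h2⟩ <;> rw [h1]
      · nlinarith [sq_nonneg ((l + 1) * θ),
          mul_nonneg (mul_nonneg (mul_nonneg hl.le h1l.le)
            (by linarith : (0:ℝ) ≤ 1 - l)) h2]
      · nlinarith [sq_nonneg ((l + 1) * θ),
          mul_nonneg (mul_nonneg hl.le h1l.le) (by linarith : (0:ℝ) ≤ -θ)]
    · rw [lossBarN_eq l hl]
      simp only [abs_zero]
      rw [show (l ^ 2 * (1 + l - 0) ^ 2 + (2 * l + 1) * 0 ^ 2 + 2 * l * (1 + l) * 0)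
          / (1 + l) ^ 2 = l ^ 2 by field_simp; ring]
      exact Real.sqrt_sq hl.le
end

section
/- Let θ be a nonzero real number, and set c̄(θ) = √(1 − 1/θ²) if |θ| > 1 and c̄(θ) = 0 if 0 < |θ| ≤ 1, with s̄(θ) = √(1 − c̄(θ)²). Then the function ϑ ↦ ‖M(θ, ϑ, c̄(θ), s̄(θ))‖_F on ℝ has a unique global minimizer, namely ϑ* = sign(θ)·(|θ| − 1/|θ|) if |θ| > 1 and ϑ* = 0 if 0 < |θ| ≤ 1, and the minimal squared loss equals 2 − 1/θ² if |θ| > 1 and θ² if 0 < |θ| ≤ 1. -/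
/-- Limiting cosine c̄(θ) in the spiked Wigner model. -/
noncomputable def cWig (θ : ℝ) : ℝ := if 1 < |θ| then Real.sqrt (1 - 1 / θ ^ 2) else 0

/-- Limiting sine s̄(θ) = √(1 − c̄(θ)²). -/
noncomputable def sWig (θ : ℝ) : ℝ := Real.sqrt (1 - cWig θ ^ 2)

/-- Asymptotic Frobenius loss in the spiked Wigner model. -/
noncomputable def lossWigF (θ v : ℝ) : ℝ := frobNorm (pivotM θ v (cWig θ) (sWig θ))

/-- Optimal Frobenius shrinker for the spiked Wigner model. -/
noncomputable def etaWigF (θ : ℝ) : ℝ :=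
  if 1 < |θ| then Real.sign θ * (|θ| - 1 / |θ|) else 0

lemma cWig_sq_le (θ : ℝ) : cWig θ ^ 2 ≤ 1 := by
  unfold cWig
  split_ifs with h
  · have hθ2 : (0:ℝ) < θ ^ 2 := by
      have : 1 < θ ^ 2 := by nlinarith [sq_abs θ, abs_nonneg θ]
      linarith
    rw [Real.sq_sqrt (by rw [sub_nonneg, div_le_one hθ2]; nlinarith [sq_abs θ, abs_nonneg θ])]
    have : 0 ≤ 1 / θ ^ 2 := by positivity
    linarith
  · norm_num

lemma cWig_sq (θ : ℝ) (h : 1 < |θ|) : cWig θ ^ 2 = 1 - 1 / θ ^ 2 := by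
  have hθ2 : (0:ℝ) < θ ^ 2 := by
    have : 1 < θ ^ 2 := by nlinarith [sq_abs θ, abs_nonneg θ]
    linarith
  rw [cWig, if_pos h, Real.sq_sqrt]
  rw [sub_nonneg, div_le_one hθ2]
  nlinarith [sq_abs θ, abs_nonneg θ]

lemma sWig_sq (θ : ℝ) : sWig θ ^ 2 = 1 - cWig θ ^ 2 := by
  rw [sWig, Real.sq_sqrt (by linarith [cWig_sq_le θ])]

lemma loss_sq (θ v : ℝ) :
    lossWigF θ v ^ 2 = v ^ 2 - 2 * θ * cWig θ ^ 2 * v + θ ^ 2 := by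
  have hs := sWig_sq θ
  have hc := cWig_sq_le θ
  have hsum : (∑ i, ∑ j, (pivotM θ v (cWig θ) (sWig θ)) i j ^ 2)
      = v ^ 2 - 2 * θ * cWig θ ^ 2 * v + θ ^ 2 := by
    simp [pivotM, Fin.sum_univ_two]
    linear_combination (v ^ 2 * (cWig θ ^ 2 + sWig θ ^ 2 + 1)) * hs
  unfold lossWigF frobNorm
  rw [hsum, Real.sq_sqrt]
  nlinarith [sq_nonneg (v - θ * cWig θ ^ 2), sq_nonneg (cWig θ),
    mul_nonneg (sq_nonneg θ) (mul_nonneg (by linarith : (0:ℝ) ≤ 1 - cWig θ ^ 2)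
      (by positivity : (0:ℝ) ≤ 1 + cWig θ ^ 2))]

lemma eta_eq (θ : ℝ) (hθ : θ ≠ 0) : etaWigF θ = θ * cWig θ ^ 2 := by
  unfold etaWigF
  by_cases h : 1 < |θ|
  · rw [if_pos h, cWig_sq θ h]
    rcases hθ.lt_or_gt with hn | hp
    · rw [abs_of_neg hn, Real.sign_of_neg hn, div_neg]; field_simp; ring
    · rw [abs_of_pos hp, Real.sign_of_pos hp]; field_simp
  · rw [if_neg h, cWig, if_neg h]; ring

theorem optimal_frobenius_shrinker_wigner (θ : ℝ) (hθ : θ ≠ 0) :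
    (∀ v : ℝ, v ≠ etaWigF θ → lossWigF θ (etaWigF θ) < lossWigF θ v) ∧
    lossWigF θ (etaWigF θ) ^ 2 = (if 1 < |θ| then 2 - 1 / θ ^ 2 else θ ^ 2) := by
  have he := eta_eq θ hθ
  constructor
  · intro v hv
    have hvne : v - θ * cWig θ ^ 2 ≠ 0 := by
      rw [he] at hv; exact sub_ne_zero.mpr hv
    have hpos : 0 < (v - θ * cWig θ ^ 2) ^ 2 :=
      lt_of_le_of_ne (sq_nonneg _) (Ne.symm (pow_ne_zero 2 hvne))
    have hnn : 0 ≤ lossWigF θ v := Real.sqrt_nonneg _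
    apply lt_of_pow_lt_pow_left₀ 2 hnn
    rw [loss_sq, loss_sq, he]
    nlinarith [hpos]
  · rw [loss_sq, he]
    by_cases h : 1 < |θ|
    · rw [if_pos h, cWig_sq θ h]
      have hθ2 : θ ^ 2 ≠ 0 := pow_ne_zero 2 hθ
      field_simp
      ring
    · rw [if_neg h, cWig, if_neg h]; ring
end
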